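/- arXiv:1708.09502 — 2 statements merged into one kernel-verified Lean document; each statement's English description precedes it below -/
import Mathlib

section
/- Let F, Z : [0,τ] → ℝ (one-dimensional case) be cadlag functions of bounded variation with total variation norms ‖F‖_v = |F(0)| + ∫_{(0,τ]} |dF(u)| and similarly for Z. Define Z̄(u) = ∫_{[u,τ]} dZ. Then |∫_{[0,τ]} F(x) dZ(x)| ≤ (sup_{u ∈ [0,τ]} |Z̄(u)|) · ‖F‖_v. -/
open MeasureTheory

/-- Integral of a real function against a signed measure, defined via the Jordan
decomposition. -/
noncomputable def sintegral (ν : MeasureTheory.SignedMeasure ℝ) (f : ℝ → ℝ) : ℝ :=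
  (∫ x, f x ∂ν.toJordanDecomposition.posPart) - ∫ x, f x ∂ν.toJordanDecomposition.negPart

/-!
On `[0, τ]` write `F x = F 0 + dF((0, x])`. By Fubini,
`∫ dF((0, x]) dZ(x) = ∫_{(0, τ]} dZ([u, τ]) dF(u) = ∫_{(0, τ]} Z̄ dF`, so
`∫_{[0,τ]} F dZ = F 0 · Z̄ 0 + ∫_{(0,τ]} Z̄ dF`, and each term is bounded by `sup |Z̄|` times
`|F 0|`, resp. `|dF|((0, τ])`.
-/

open Set

namespace MeasureTheory

variable {α : Type*} [MeasurableSpace α]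

noncomputable def JordanDecomposition.restrict (j : JordanDecomposition α) (A : Set α) :
    JordanDecomposition α where
  posPart := j.posPart.restrict A
  negPart := j.negPart.restrict A
  mutuallySingular := ((j.mutuallySingular.restrict A).symm.restrict A).symm

theorem SignedMeasure.toJordanDecomposition_restrict (s : SignedMeasure α) {A : Set α}
    (hA : MeasurableSet A) :
    SignedMeasure.toJordanDecomposition (s.restrict A) = s.toJordanDecomposition.restrict A := by
  refine SignedMeasure.toJordanDecomposition_eq (VectorMeasure.ext fun t ht => ?_)
  rw [VectorMeasure.restrict_apply _ hA ht, s.apply_eq_posPart_real_sub_negPart_real (ht.inter hA),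
    JordanDecomposition.toSignedMeasure, Measure.toSignedMeasure_sub_apply ht]
  simp [JordanDecomposition.restrict, measureReal_restrict_apply ht]

theorem SignedMeasure.abs_apply_le_biSup {ι : Type*} (ν : SignedMeasure α) (t : ι → Set α)
    {s : Set ι} {i : ι} (hi : i ∈ s) : |ν (t i)| ≤ ⨆ j ∈ s, |ν (t j)| :=
  le_ciSup₂ (f := fun j (_ : j ∈ s) => |ν (t j)|)
    ⟨ν.totalVariation.real univ, by
      simp only [mem_upperBounds, mem_iUnion, mem_range]
      rintro _ ⟨j, -, rfl⟩
      rw [← Real.norm_eq_abs]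
      exact (ν.norm_le_totalVariation _).trans (measureReal_mono (subset_univ _))⟩ i hi

theorem integrable_measureReal_of_measurable {β : Type*} [MeasurableSpace β] (μ : Measure α)
    [IsFiniteMeasure μ] (ν : Measure β) [IsFiniteMeasure ν] {t : α → Set β}
    (ht : Measurable fun x => ν.real (t x)) : Integrable (fun x => ν.real (t x)) μ :=
  .of_bound ht.aestronglyMeasurable (ν.real univ) <| ae_of_all _ fun x => by
    simpa [abs_of_nonneg measureReal_nonneg] using measureReal_mono (subset_univ (t x))

theorem measurable_measureReal_Ioc (ν : Measure ℝ) [IsFiniteMeasure ν] (a : ℝ) :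
    Measurable fun x => ν.real (Ioc a x) :=
  Monotone.measurable fun _ _ h => measureReal_mono (Ioc_subset_Ioc_right h)

theorem measurable_measureReal_Ici (ν : Measure ℝ) [IsFiniteMeasure ν] :
    Measurable fun u => ν.real (Ici u) :=
  Antitone.measurable fun _ _ h => measureReal_mono (Ici_subset_Ici.mpr h)

theorem integral_measureReal_Ioc (μ ν : Measure ℝ) [IsFiniteMeasure μ] [IsFiniteMeasure ν]
    (a : ℝ) : ∫ x, ν.real (Ioc a x) ∂μ = ∫ u in Ioi a, μ.real (Ici u) ∂ν := by
  set s : Set (ℝ × ℝ) := {p | a < p.2 ∧ p.2 ≤ p.1}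
  have hs : MeasurableSet s :=
    (measurableSet_lt measurable_const measurable_snd).inter
      (measurableSet_le measurable_snd measurable_fst)
  have hx : ∀ x, ν.real (Ioc a x) = ∫ u, s.indicator 1 (x, u) ∂ν := fun x => by
    rw [← integral_indicator_one measurableSet_Ioc]; rfl
  have hu : ∀ u, (Ioi a).indicator (fun u => μ.real (Ici u)) u = ∫ x, s.indicator 1 (x, u) ∂μ :=
    fun u => by
      by_cases h : a < u
      · rw [indicator_of_mem (mem_Ioi.mpr h), ← integral_indicator_one measurableSet_Ici]
        congr 1 with x
        simp [s, indicator, h]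
      · simp [s, h]
  rw [← integral_indicator measurableSet_Ioi]
  simp_rw [hx, hu]
  exact integral_integral_swap ((integrable_const 1).indicator hs)

theorem SignedMeasure.integrable_apply_Ioc (ν : SignedMeasure ℝ) (μ : Measure ℝ)
    [IsFiniteMeasure μ] (a : ℝ) : Integrable (fun x => ν (Ioc a x)) μ := by
  simp_rw [ν.apply_eq_posPart_real_sub_negPart_real measurableSet_Ioc]
  exact (integrable_measureReal_of_measurable μ _ (measurable_measureReal_Ioc _ a)).sub
    (integrable_measureReal_of_measurable μ _ (measurable_measureReal_Ioc _ a))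

theorem SignedMeasure.restrict_Icc_apply_Ici (ν : SignedMeasure ℝ) {a b u : ℝ} (hu : a ≤ u) :
    ν.restrict (Icc a b) (Ici u) = ν (Icc u b) := by
  rw [VectorMeasure.restrict_apply _ measurableSet_Icc measurableSet_Ici]
  congr 1
  ext x
  simp only [mem_inter_iff, mem_Ici, mem_Icc]
  exact ⟨fun ⟨hux, _, hxb⟩ => ⟨hux, hxb⟩, fun ⟨hux, hxb⟩ => ⟨hux, hu.trans hux, hxb⟩⟩

theorem SignedMeasure.abs_indicator_restrict_Icc_apply_Ici_le (ν : SignedMeasure ℝ)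
    {a b S : ℝ} (hS : ∀ u ∈ Ioc a b, |ν (Icc u b)| ≤ S) (u : ℝ) :
    |(Ioi a).indicator (fun u => ν.restrict (Icc a b) (Ici u)) u|
      ≤ (Ioc a b).indicator (fun _ => S) u := by
  rcases le_or_gt u a with hua | hua
  · have hu : u ∉ Ioi a := not_lt.2 hua
    rw [indicator_of_notMem hu, indicator_of_notMem fun h => hu h.1, abs_zero]
  rw [indicator_of_mem (mem_Ioi.2 hua), ν.restrict_Icc_apply_Ici hua.le]
  rcases le_or_gt u b with hub | hub
  · rw [indicator_of_mem (show u ∈ Ioc a b from ⟨hua, hub⟩)]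
    exact hS u ⟨hua, hub⟩
  · rw [indicator_of_notMem fun h => hub.not_ge h.2, Icc_eq_empty_of_lt hub,
      VectorMeasure.empty, abs_zero]

end MeasureTheory

theorem sintegral_restrict (ν : SignedMeasure ℝ) {A : Set ℝ} (hA : MeasurableSet A)
    (f : ℝ → ℝ) :
    sintegral (ν.restrict A) f = (∫ x in A, f x ∂ν.toJordanDecomposition.posPart)
      - ∫ x in A, f x ∂ν.toJordanDecomposition.negPart := by
  rw [sintegral, ν.toJordanDecomposition_restrict hA]
  rfl

theorem sintegral_restrict_congr (ν : SignedMeasure ℝ) {A : Set ℝ} (hA : MeasurableSet A)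
    {f g : ℝ → ℝ} (h : EqOn f g A) : sintegral (ν.restrict A) f = sintegral (ν.restrict A) g := by
  simp only [sintegral_restrict ν hA, setIntegral_congr_fun hA h]

theorem sintegral_const_add (ν : SignedMeasure ℝ) (c : ℝ) {g : ℝ → ℝ}
    (hpos : Integrable g ν.toJordanDecomposition.posPart)
    (hneg : Integrable g ν.toJordanDecomposition.negPart) :
    sintegral ν (fun x => c + g x) = c * ν univ + sintegral ν g := by
  rw [sintegral, sintegral, integral_add (integrable_const c) hpos,
    integral_add (integrable_const c) hneg, ν.apply_eq_posPart_real_sub_negPart_real .univ]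
  simp only [integral_const, smul_eq_mul]
  ring

theorem sintegral_apply_Ioc (μ ν : SignedMeasure ℝ) (a : ℝ) :
    sintegral μ (fun x => ν (Ioc a x)) = sintegral ν ((Ioi a).indicator fun u => μ (Ici u)) := by
  have hint : ∀ (m m' : Measure ℝ) [IsFiniteMeasure m] [IsFiniteMeasure m'],
      Integrable (fun u => m.real (Ici u)) (m'.restrict (Ioi a)) := fun m _ _ _ =>
    integrable_measureReal_of_measurable _ m (measurable_measureReal_Ici m)
  simp only [sintegral, integral_indicator measurableSet_Ioi,
    ν.apply_eq_posPart_real_sub_negPart_real measurableSet_Ioc,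
    μ.apply_eq_posPart_real_sub_negPart_real measurableSet_Ici]
  rw [integral_sub, integral_sub, integral_sub (hint _ _) (hint _ _),
    integral_sub (hint _ _) (hint _ _)]
  · simp only [integral_measureReal_Ioc]
    ring
  all_goals exact integrable_measureReal_of_measurable _ _ (measurable_measureReal_Ioc _ a)

theorem abs_sintegral_le_of_abs_le_indicator (ν : SignedMeasure ℝ) {s : Set ℝ}
    (hs : MeasurableSet s) {h : ℝ → ℝ} {S : ℝ} (hh : ∀ u, |h u| ≤ s.indicator (fun _ => S) u) :
    |sintegral ν h| ≤ S * ν.totalVariation.real s := by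
  have hbound : ∀ (m : Measure ℝ) [IsFiniteMeasure m], |∫ u, h u ∂m| ≤ S * m.real s :=
    fun m _ => calc
      |∫ u, h u ∂m| ≤ ∫ u, s.indicator (fun _ => S) u ∂m := by
        simpa only [Real.norm_eq_abs] using norm_integral_le_of_norm_le
          ((integrable_const S).indicator hs)
          (ae_of_all m fun u => (Real.norm_eq_abs _).trans_le (hh u))
      _ = S * m.real s := by rw [integral_indicator_const S hs, smul_eq_mul, mul_comm]
  calc |sintegral ν h|
      ≤ |∫ u, h u ∂ν.toJordanDecomposition.posPart|
        + |∫ u, h u ∂ν.toJordanDecomposition.negPart| := abs_sub _ _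
    _ ≤ S * ν.toJordanDecomposition.posPart.real s + S * ν.toJordanDecomposition.negPart.real s :=
      add_le_add (hbound _) (hbound _)
    _ = S * ν.totalVariation.real s := by
      rw [SignedMeasure.totalVariation, measureReal_add_apply]
      ring

theorem stmt2_general (τ : ℝ) (hτ : 0 < τ) (F Zbar : ℝ → ℝ)
    (νF νZ : MeasureTheory.SignedMeasure ℝ)
    (hF : ∀ x ∈ Set.Icc (0 : ℝ) τ, F x = F 0 + νF (Set.Ioc 0 x))
    (hZbar : ∀ u, Zbar u = νZ (Set.Icc u τ)) :
    |sintegral (MeasureTheory.VectorMeasure.restrict νZ (Set.Icc 0 τ)) F|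
      ≤ (⨆ u ∈ Set.Icc (0 : ℝ) τ, |Zbar u|)
        * (|F 0| + (MeasureTheory.SignedMeasure.totalVariation νF (Set.Ioc 0 τ)).toReal) := by
  obtain rfl : Zbar = fun u => νZ (Icc u τ) := funext hZbar
  set μ := νZ.restrict (Icc 0 τ)
  set S := ⨆ u ∈ Icc (0 : ℝ) τ, |νZ (Icc u τ)|
  have hS : ∀ u ∈ Icc 0 τ, |νZ (Icc u τ)| ≤ S := fun _ => νZ.abs_apply_le_biSup (fun u => Icc u τ)
  have hdecomp : sintegral μ F
      = F 0 * νZ (Icc 0 τ) + sintegral νF ((Ioi 0).indicator fun u => μ (Ici u)) := by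
    rw [sintegral_restrict_congr νZ measurableSet_Icc hF, sintegral_const_add _ _
      (νF.integrable_apply_Ioc _ 0) (νF.integrable_apply_Ioc _ 0), sintegral_apply_Ioc,
      VectorMeasure.restrict_apply _ measurableSet_Icc .univ, univ_inter]
  calc |sintegral μ F|
      ≤ |F 0| * |νZ (Icc 0 τ)| + |sintegral νF ((Ioi 0).indicator fun u => μ (Ici u))| := by
        rw [hdecomp, ← abs_mul]
        exact abs_add_le _ _
    _ ≤ |F 0| * S + S * νF.totalVariation.real (Ioc 0 τ) :=
        add_le_add (mul_le_mul_of_nonneg_left (hS 0 ⟨le_rfl, hτ.le⟩) (abs_nonneg _))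
          (abs_sintegral_le_of_abs_le_indicator νF measurableSet_Ioc
            (νZ.abs_indicator_restrict_Icc_apply_Ici_le fun u hu => hS u (Ioc_subset_Icc_self hu)))
    _ = S * (|F 0| + (νF.totalVariation (Ioc 0 τ)).toReal) := by
      rw [measureReal_def]
      ring

/-- One-dimensional integration-by-parts bound:
`|∫_{[0,τ]} F dZ| ≤ (sup_{u ∈ [0,τ]} |Z̄(u)|) ⬝ ‖F‖_v`, where `Z̄ u = νZ [u,τ]` and
`‖F‖_v = |F 0| + |dF|((0,τ])` is the variation norm of `F`. -/
theorem stmt2 (τ : ℝ) (hτ : 0 < τ) (F Z Zbar : ℝ → ℝ)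
    (νF νZ : MeasureTheory.SignedMeasure ℝ)
    (hF : ∀ x ∈ Set.Icc (0 : ℝ) τ, F x = F 0 + νF (Set.Ioc 0 x))
    (hZ : ∀ x ∈ Set.Icc (0 : ℝ) τ, Z x = Z 0 + νZ (Set.Ioc 0 x))
    (hZbar : ∀ u, Zbar u = νZ (Set.Icc u τ)) :
    |sintegral (MeasureTheory.VectorMeasure.restrict νZ (Set.Icc 0 τ)) F|
      ≤ (⨆ u ∈ Set.Icc (0 : ℝ) τ, |Zbar u|)
        * (|F 0| + (MeasureTheory.SignedMeasure.totalVariation νF (Set.Ioc 0 τ)).toReal) :=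
  stmt2_general τ hτ F Zbar νF νZ hF hZbar
end

section
/- Let ε ↦ F(ε) and ε ↦ G(ε) be real functions on an interval I containing 0, with ε₁ minimizing F and ε₀ minimizing G over I, both interior minima, and suppose F and G are twice differentiable with G''(ε) ≥ c > 0 on I and G'(ε₀) = 0. Suppose further that |F(ε) − G(ε) − (F(ε₀) − G(ε₀))| ≤ K|ε − ε₀| for all ε ∈ I (the difference process is Lipschitz with constant K at ε₀). Then |ε₁ − ε₀| ≤ 2K/c. -/
/-!
Subtracting the quadratic `c / 2 * (ε - ε₀) ^ 2` from `G` leaves a convex function with a critical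
point at `ε₀`, so `G ε₁ - G ε₀ ≥ c / 2 * (ε₁ - ε₀) ^ 2`. On the other hand, since `ε₁` minimizes
`F`, `G ε₁ - G ε₀ ≤ (G - F) ε₁ - (G - F) ε₀ ≤ K * |ε₁ - ε₀|`. Comparing the two bounds gives
`|ε₁ - ε₀| ≤ 2 * K / c`.
-/

theorem ConvexOn.isMinOn_of_hasDerivAt_eq_zero {S : Set ℝ} {f : ℝ → ℝ} {x : ℝ}
    (hf : ConvexOn ℝ S f) (hx : x ∈ S) (hfx : HasDerivAt f 0 x) : IsMinOn f S x := by
  refine isMinOn_iff.2 fun y hy ↦ ?_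
  rcases lt_trichotomy x y with hxy | rfl | hyx
  · have := hf.le_slope_of_hasDerivAt hx hy hxy hfx
    rwa [slope_def_field, le_div_iff₀ (sub_pos.2 hxy), zero_mul, sub_nonneg] at this
  · exact le_rfl
  · have := hf.slope_le_of_hasDerivAt hy hx hyx hfx
    rwa [slope_def_field, div_le_iff₀ (sub_pos.2 hyx), zero_mul, sub_nonpos] at this

theorem half_mul_sq_sub_le_sub_of_le_deriv2 {S : Set ℝ} (hS : Convex ℝ S) {f f' f'' : ℝ → ℝ}
    {c x₀ : ℝ} (hf : ∀ x ∈ S, HasDerivAt f (f' x) x) (hf' : ∀ x ∈ S, HasDerivAt f' (f'' x) x)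
    (hf'' : ∀ x ∈ S, c ≤ f'' x) (hx₀ : x₀ ∈ S) (hf'x₀ : f' x₀ = 0) {x : ℝ} (hx : x ∈ S) :
    c / 2 * (x - x₀) ^ 2 ≤ f x - f x₀ := by
  have hg : ∀ x ∈ S, HasDerivAt (fun x ↦ f x - c / 2 * (x - x₀) ^ 2) (f' x - c * (x - x₀)) x :=
    fun x hx ↦
      ((hf x hx).sub ((((hasDerivAt_id x).sub_const x₀).pow 2).const_mul (c / 2))).congr_deriv
        (by simp only [id_eq]; ring)
  have hg' : ∀ x ∈ S, HasDerivAt (fun x ↦ f' x - c * (x - x₀)) (f'' x - c) x := fun x hx ↦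
    ((hf' x hx).sub (((hasDerivAt_id x).sub_const x₀).const_mul c)).congr_deriv (by ring)
  have hconv : ConvexOn ℝ S fun x ↦ f x - c / 2 * (x - x₀) ^ 2 :=
    convexOn_of_hasDerivWithinAt2_nonneg hS
      (fun x hx ↦ (hg x hx).continuousAt.continuousWithinAt)
      (fun x hx ↦ (hg x (interior_subset hx)).hasDerivWithinAt)
      (fun x hx ↦ (hg' x (interior_subset hx)).hasDerivWithinAt)
      (fun x hx ↦ sub_nonneg.2 (hf'' x (interior_subset hx)))
  have hmin := hconv.isMinOn_of_hasDerivAt_eq_zero hx₀ (by simpa [hf'x₀] using hg x₀ hx₀)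
  have hle := isMinOn_iff.1 hmin x hx
  simp only [sub_self] at hle
  linarith

theorem abs_le_of_half_mul_sq_le_mul_abs {c K t : ℝ} (hc : 0 < c) (hK : 0 ≤ K)
    (h : c / 2 * t ^ 2 ≤ K * |t|) : |t| ≤ 2 * K / c := by
  rw [le_div_iff₀ hc]
  rcases (abs_nonneg t).eq_or_lt with ht | ht
  · rw [← ht, zero_mul]; positivity
  · rw [← sq_abs] at h
    nlinarith

theorem stmt15_general (a b : ℝ)
    (F G G' G'' : ℝ → ℝ) (c K : ℝ) (hc : 0 < c) (hK : 0 ≤ K)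
    (hGd : ∀ x ∈ Set.Ioo a b, HasDerivAt G (G' x) x)
    (hGd2 : ∀ x ∈ Set.Ioo a b, HasDerivAt G' (G'' x) x)
    (hG'' : ∀ x ∈ Set.Ioo a b, c ≤ G'' x)
    (ε₀ ε₁ : ℝ) (hε₀ : ε₀ ∈ Set.Ioo a b) (hε₁ : ε₁ ∈ Set.Ioo a b)
    (hminF : ∀ x ∈ Set.Ioo a b, F ε₁ ≤ F x)
    (hG'ε₀ : G' ε₀ = 0)
    (hLip : ∀ ε ∈ Set.Ioo a b, |F ε - G ε - (F ε₀ - G ε₀)| ≤ K * |ε - ε₀|) :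
    |ε₁ - ε₀| ≤ 2 * K / c := by
  have hcurv : c / 2 * (ε₁ - ε₀) ^ 2 ≤ G ε₁ - G ε₀ :=
    half_mul_sq_sub_le_sub_of_le_deriv2 (convex_Ioo a b) hGd hGd2 hG'' hε₀ hG'ε₀ hε₁
  have hFmin := hminF ε₀ hε₀
  have hdiff := (abs_le.1 (hLip ε₁ hε₁)).1
  exact abs_le_of_half_mul_sq_le_mul_abs hc hK (by linarith)

/-- Abstract curvature argument from Appendix C: if `ε₁` minimizes `F` and `ε₀`
minimizes `G` over the interval `(a,b)` (interior minima), `G` is twice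
differentiable with `G'' ≥ c > 0` and `G'(ε₀) = 0`, and the difference `F - G` is
`K`-Lipschitz at `ε₀`, then `|ε₁ - ε₀| ≤ 2K/c`. -/
theorem stmt15 (a b : ℝ) (hab : a < b) (h0 : (0 : ℝ) ∈ Set.Ioo a b)
    (F G F' F'' G' G'' : ℝ → ℝ) (c K : ℝ) (hc : 0 < c) (hK : 0 ≤ K)
    (hFd : ∀ x ∈ Set.Ioo a b, HasDerivAt F (F' x) x)
    (hFd2 : ∀ x ∈ Set.Ioo a b, HasDerivAt F' (F'' x) x)
    (hGd : ∀ x ∈ Set.Ioo a b, HasDerivAt G (G' x) x)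
    (hGd2 : ∀ x ∈ Set.Ioo a b, HasDerivAt G' (G'' x) x)
    (hG'' : ∀ x ∈ Set.Ioo a b, c ≤ G'' x)
    (ε₀ ε₁ : ℝ) (hε₀ : ε₀ ∈ Set.Ioo a b) (hε₁ : ε₁ ∈ Set.Ioo a b)
    (hminF : ∀ x ∈ Set.Ioo a b, F ε₁ ≤ F x)
    (hminG : ∀ x ∈ Set.Ioo a b, G ε₀ ≤ G x)
    (hG'ε₀ : G' ε₀ = 0)
    (hLip : ∀ ε ∈ Set.Ioo a b, |F ε - G ε - (F ε₀ - G ε₀)| ≤ K * |ε - ε₀|) :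
    |ε₁ - ε₀| ≤ 2 * K / c :=
  stmt15_general a b F G G' G'' c K hc hK hGd hGd2 hG'' ε₀ ε₁ hε₀ hε₁ hminF hG'ε₀ hLip
end
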